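/- Fernández–Procacci bound on the log-partition function: if μ, p : P → ℝ≥0 satisfy p_x · Z_{Γ*(x)}(μ) ≤ μ_x for all x, then for every Λ ⊆ P we have Z_Λ(−p) ≥ Π_{x∈Λ}(1+μ_x)^{−1}, equivalently −log Z_Λ(−p) ≤ Σ_{x∈Λ} log(1+μ_x). -/

import Mathlib

/-!
Write `Z_S` for `Z_S(-p)`. Deletion–contraction gives `Z_{S ∪ {y}} = Z_S - p_y Z_{S∖Γ*(y)}` for
`y ∉ S`, so the theorem follows by adding one polymer at a time once we know
`p_y Z_{S∖Γ*(y)} (1 + μ_y) ≤ μ_y Z_S`. This is the case `x = y` (using `Z_{Γ*(y)∖S}(μ) ≥ 1 + μ_y`)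
of the stronger bound `p_x Z_{S∖Γ*(x)} Z_{Γ*(x)∖S}(μ) ≤ μ_x Z_S` for `x ∉ S`, proved together
with `Z_S > 0` by strong induction on `S`. If `S` misses `Γ*(x)` the bound is the hypothesis
times `Z_S`; otherwise remove some `y ∈ S ∩ Γ*(x)` from `S` and combine the bounds for `x` and
`y` at the smaller set with the submultiplicativity `Z_{B ∪ C}(μ) ≤ Z_B(μ) Z_C(μ)`.
-/

open Finset

def indepSet {P : Type*} [DecidableEq P] (W : P → P → ℕ) (S : Finset P) : Prop :=
  ∀ x ∈ S, ∀ y ∈ S, x ≠ y → W x y = 1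

instance {P : Type*} [DecidableEq P] (W : P → P → ℕ) : DecidablePred (indepSet W) :=
  fun _ => by unfold indepSet; infer_instance

/-- Polymer partition function `Z_Λ(a) = Σ_{S ⊆ Λ independent} Π_{y ∈ S} a y`. -/
def Zpart {P : Type*} [DecidableEq P] {R : Type*} [CommRing R] (W : P → P → ℕ)
    (Λ : Finset P) (a : P → R) : R :=
  ∑ S ∈ Λ.powerset.filter (indepSet W), ∏ y ∈ S, a y

/-- `Γ*(x)`: the set of polymers incompatible with `x`. -/
def Γstar {P : Type*} [Fintype P] [DecidableEq P] (W : P → P → ℕ) (x : P) : Finset P :=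
  Finset.univ.filter fun y => W x y = 0

section IndepSet

variable {P : Type*} [DecidableEq P] (W : P → P → ℕ)

lemma indepSet_empty : indepSet W (∅ : Finset P) := by
  simp [indepSet]

lemma indepSet_singleton (y : P) : indepSet W {y} := by
  simp +contextual [indepSet]

variable {W} in
lemma indepSet.mono {S T : Finset P} (hT : indepSet W T) (h : S ⊆ T) : indepSet W S :=
  fun x hx y hy => hT x (h hx) y (h hy)

lemma indepSet_insert_iff (hsym : ∀ x y, W x y = W y x) {y : P} {T : Finset P} (hy : y ∉ T) :
    indepSet W (insert y T) ↔ indepSet W T ∧ ∀ z ∈ T, W y z = 1 := by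
  refine ⟨fun h => ⟨h.mono (subset_insert y T), fun z hz =>
    h y (mem_insert_self y T) z (mem_insert_of_mem hz) (ne_of_mem_of_not_mem hz hy).symm⟩, ?_⟩
  rintro ⟨hT, hyT⟩ u hu v hv huv
  rcases mem_insert.1 hu with rfl | hu <;> rcases mem_insert.1 hv with hv | hv
  · exact absurd hv.symm huv
  · exact hyT v hv
  · rw [hv, hsym]; exact hyT u hu
  · exact hT u hu v hv huv

end IndepSet

section Zpart

variable {P : Type*} [DecidableEq P] (W : P → P → ℕ) {R : Type*} [CommRing R]

lemma Zpart_empty (a : P → R) : Zpart W ∅ a = 1 := by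
  rw [Zpart, powerset_empty, filter_singleton, if_pos (indepSet_empty W), sum_singleton,
    prod_empty]

variable [PartialOrder R] [IsOrderedRing R] {a : P → R}

lemma Zpart_mono (ha : ∀ x, 0 ≤ a x) {B C : Finset P} (h : B ⊆ C) :
    Zpart W B a ≤ Zpart W C a := by
  refine sum_le_sum_of_subset_of_nonneg ?_ fun _ _ _ => prod_nonneg fun y _ => ha y
  exact filter_subset_filter _ (powerset_mono.2 h)

lemma one_add_le_Zpart (ha : ∀ x, 0 ≤ a x) {Λ : Finset P} {y : P} (hy : y ∈ Λ) :
    1 + a y ≤ Zpart W Λ a := by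
  have hsub : ({∅, {y}} : Finset (Finset P)) ⊆ Λ.powerset.filter (indepSet W) := by
    simp [insert_subset_iff, hy, indepSet_empty, indepSet_singleton]
  calc 1 + a y = ∑ S ∈ ({∅, {y}} : Finset (Finset P)), ∏ z ∈ S, a z := by
        rw [sum_pair (singleton_ne_empty y).symm, prod_empty, prod_singleton]
    _ ≤ Zpart W Λ a :=
        sum_le_sum_of_subset_of_nonneg hsub fun _ _ _ => prod_nonneg fun z _ => ha z

/-- Splitting an independent set of `B ∪ C` along `B` gives independent sets of `B` and `C`. -/
lemma Zpart_union_le (ha : ∀ x, 0 ≤ a x) (B C : Finset P) :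
    Zpart W (B ∪ C) a ≤ Zpart W B a * Zpart W C a := by
  set split : Finset P → Finset P × Finset P := fun T => (T ∩ B, T \ B)
  have hinj : Set.InjOn split ((B ∪ C).powerset.filter (indepSet W)) := by
    intro T _ T' _ h
    simp only [split, Prod.mk.injEq] at h
    calc T = T ∩ B ∪ T \ B := (sup_inf_sdiff T B).symm
      _ = T' ∩ B ∪ T' \ B := by rw [h.1, h.2]
      _ = T' := sup_inf_sdiff T' B
  have hmaps : ∀ T ∈ (B ∪ C).powerset.filter (indepSet W),
      split T ∈ B.powerset.filter (indepSet W) ×ˢ C.powerset.filter (indepSet W) := by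
    simp only [mem_filter, mem_powerset, mem_product, split]
    rintro T ⟨hT, hind⟩
    refine ⟨⟨inter_subset_right, hind.mono inter_subset_left⟩, ?_, hind.mono sdiff_subset⟩
    exact sdiff_le_iff.2 hT
  calc Zpart W (B ∪ C) a
      = ∑ q ∈ ((B ∪ C).powerset.filter (indepSet W)).image split,
          (∏ z ∈ q.1, a z) * ∏ z ∈ q.2, a z := by
        rw [sum_image hinj, Zpart]
        exact sum_congr rfl fun T _ => (prod_inter_mul_prod_sdiff T B a).symm
    _ ≤ ∑ q ∈ B.powerset.filter (indepSet W) ×ˢ C.powerset.filter (indepSet W),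
          (∏ z ∈ q.1, a z) * ∏ z ∈ q.2, a z := by
        refine sum_le_sum_of_subset_of_nonneg (image_subset_iff.2 hmaps) fun _ _ _ => ?_
        exact mul_nonneg (prod_nonneg fun z _ => ha z) (prod_nonneg fun z _ => ha z)
    _ = Zpart W B a * Zpart W C a := by
        rw [Zpart, Zpart, sum_mul_sum, sum_product]

end Zpart

section Recursion

variable {P : Type*} [Fintype P] [DecidableEq P] (W : P → P → ℕ)

@[simp]
lemma mem_Γstar {x y : P} : y ∈ Γstar W x ↔ W x y = 0 := by
  simp [Γstar]

lemma subset_sdiff_Γstar_iff (h01 : ∀ x y, W x y = 0 ∨ W x y = 1) {y : P} {T Λ : Finset P}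
    (hT : T ⊆ Λ) : T ⊆ Λ \ Γstar W y ↔ ∀ z ∈ T, W y z = 1 := by
  refine ⟨fun h z hz => ?_, fun h z hz => mem_sdiff.2 ⟨hT hz, ?_⟩⟩
  · have := (mem_sdiff.1 (h hz)).2
    rw [mem_Γstar] at this
    exact (h01 y z).resolve_left this
  · rw [mem_Γstar, h z hz]
    exact one_ne_zero

/-- Deletion–contraction: an independent set of `insert y Λ` either avoids `y`, or is `y`
together with an independent set of `Λ` compatible with `y`. -/
lemma Zpart_insert (hsym : ∀ x y, W x y = W y x) (h01 : ∀ x y, W x y = 0 ∨ W x y = 1)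
    {R : Type*} [CommRing R] (a : P → R) {y : P} {Λ : Finset P} (hy : y ∉ Λ) :
    Zpart W (insert y Λ) a = Zpart W Λ a + a y * Zpart W (Λ \ Γstar W y) a := by
  have hterm : ∀ t ∈ Λ.powerset,
      (if indepSet W (insert y t) then ∏ z ∈ insert y t, a z else 0)
        = if t ⊆ Λ \ Γstar W y then a y * (if indepSet W t then ∏ z ∈ t, a z else 0) else 0 := by
    intro t ht
    have hyt : y ∉ t := fun h => hy (mem_powerset.1 ht h)
    simp only [indepSet_insert_iff W hsym hyt, prod_insert hyt,
      subset_sdiff_Γstar_iff W h01 (mem_powerset.1 ht)]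
    split_ifs <;> simp_all
  have hpowerset : Λ.powerset.filter (· ⊆ Λ \ Γstar W y) = (Λ \ Γstar W y).powerset := by
    ext t
    simp only [mem_filter, mem_powerset]
    exact ⟨And.right, fun h => ⟨h.trans sdiff_subset, h⟩⟩
  unfold Zpart
  rw [sum_filter, sum_powerset_insert hy, ← sum_filter, sum_congr rfl hterm, ← sum_filter,
    hpowerset, ← mul_sum, ← sum_filter]

end Recursion

section FernandezProcacci

variable {P : Type*} [Fintype P] [DecidableEq P]

/-- `p x · Z_{S∖Γ*(x)}(-p) / Z_S(-p) ≤ μ x / Z_{Γ*(x)∖S}(μ)`, with the denominators cleared. -/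
def FPRatioBound (W : P → P → ℕ) (μ p : P → ℝ) (S : Finset P) (x : P) : Prop :=
  p x * Zpart W (S \ Γstar W x) (fun z => -p z) * Zpart W (Γstar W x \ S) μ ≤
    μ x * Zpart W S (fun z => -p z)

variable {W : P → P → ℕ} {μ p : P → ℝ} {S : Finset P} {x y : P}

lemma fpRatioBound_of_disjoint (hFP : p x * Zpart W (Γstar W x) μ ≤ μ x)
    (hS : 0 ≤ Zpart W S (fun z => -p z)) (hdisj : Disjoint S (Γstar W x)) :
    FPRatioBound W μ p S x := by
  rw [FPRatioBound, sdiff_eq_self_of_disjoint hdisj, sdiff_eq_self_of_disjoint hdisj.symm,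
    mul_right_comm]
  exact mul_le_mul_of_nonneg_right hFP hS

lemma FPRatioBound.le_one_add_mul_Zpart_insert (hsym : ∀ x y, W x y = W y x)
    (hdiag : ∀ x, W x x = 0) (h01 : ∀ x y, W x y = 0 ∨ W x y = 1) (hμ : ∀ x, 0 ≤ μ x)
    (hp : 0 ≤ p y) (hy : y ∉ S) (hS : 0 ≤ Zpart W (S \ Γstar W y) (fun z => -p z))
    (hb : FPRatioBound W μ p S y) :
    Zpart W S (fun z => -p z) ≤ (1 + μ y) * Zpart W (insert y S) (fun z => -p z) := by
  have hc : 1 + μ y ≤ Zpart W (Γstar W y \ S) μ :=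
    one_add_le_Zpart W hμ (mem_sdiff.2 ⟨(mem_Γstar W).2 (hdiag y), hy⟩)
  have h := (mul_le_mul_of_nonneg_left hc (mul_nonneg hp hS)).trans hb
  rw [Zpart_insert W hsym h01 _ hy]
  linarith

lemma mul_le_mul_sub_of_ratio_bounds {u v ZA ZAy Zd c μx μy Z : ℝ} (hμx : 0 ≤ μx)
    (hμy : 0 ≤ μy) (hu : 0 ≤ u) (hc : 1 + μy ≤ c) (hsplit : ZAy = ZA + μy * Zd)
    (hsub : ZAy ≤ Zd * c) (hx : u * ZAy ≤ μx * Z) (hy : v * c ≤ μy * Z) :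
    u * ZA ≤ μx * (Z - v) := by
  have hZA : c * ZA ≤ (c - μy) * ZAy := by nlinarith [mul_le_mul_of_nonneg_left hsub hμy]
  refine le_of_mul_le_mul_left ?_ (by linarith : 0 < c)
  calc c * (u * ZA) = u * (c * ZA) := by ring
    _ ≤ u * ((c - μy) * ZAy) := mul_le_mul_of_nonneg_left hZA hu
    _ = (c - μy) * (u * ZAy) := by ring
    _ ≤ (c - μy) * (μx * Z) := mul_le_mul_of_nonneg_left hx (by linarith)
    _ ≤ c * (μx * (Z - v)) := by nlinarith [mul_le_mul_of_nonneg_left hy hμx]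

/-- Since `y ∈ Γ*(x)`, adding `y` to `S` moves it from `Γ*(x) ∖ S` to `S ∖ Γ*(x)`; the loss in
`Z_{Γ*(x)∖S}(μ)` is controlled by submultiplicativity, the loss in `Z_S(-p)` by the bound at `y`. -/
lemma FPRatioBound.insert_of_mem_Γstar (hsym : ∀ x y, W x y = W y x) (hdiag : ∀ x, W x x = 0)
    (h01 : ∀ x y, W x y = 0 ∨ W x y = 1) (hμ : ∀ x, 0 ≤ μ x) (hp : 0 ≤ p x)
    (hy : y ∉ S) (hyx : y ∈ Γstar W x)
    (hSx : 0 ≤ Zpart W (S \ Γstar W x) (fun z => -p z))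
    (hbx : FPRatioBound W μ p S x) (hby : FPRatioBound W μ p S y) :
    FPRatioBound W μ p (insert y S) x := by
  set A := Γstar W x \ insert y S
  have hyA : y ∉ A := fun h => (mem_sdiff.1 h).2 (mem_insert_self y S)
  have hΓx : Γstar W x \ S = insert y A := by
    ext z
    by_cases hz : z = y <;> simp_all [A]
  have hinsert : insert y S \ Γstar W x = S \ Γstar W x := by
    ext z
    by_cases hz : z = y <;> simp_all
  have hyΓy : y ∈ Γstar W y \ S := mem_sdiff.2 ⟨(mem_Γstar W).2 (hdiag y), hy⟩
  have hsplit := Zpart_insert W hsym h01 μ hyA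
  have hsub :
      Zpart W (insert y A) μ ≤ Zpart W (A \ Γstar W y) μ * Zpart W (Γstar W y \ S) μ := by
    refine (Zpart_mono W hμ ?_).trans (Zpart_union_le W hμ _ _)
    intro z hz
    rcases mem_insert.1 hz with rfl | hzA
    · exact mem_union_right _ hyΓy
    by_cases hzy : z ∈ Γstar W y
    · refine mem_union_right _ (mem_sdiff.2 ⟨hzy, fun hzS => ?_⟩)
      exact (mem_sdiff.1 hzA).2 (mem_insert_of_mem hzS)
    · exact mem_union_left _ (mem_sdiff.2 ⟨hzA, hzy⟩)
  rw [FPRatioBound, hΓx] at hbx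
  rw [FPRatioBound, hinsert, Zpart_insert W hsym h01 _ hy, neg_mul, ← sub_eq_add_neg]
  exact mul_le_mul_sub_of_ratio_bounds (hμ x) (hμ y) (mul_nonneg hp hSx)
    (one_add_le_Zpart W hμ hyΓy) hsplit hsub hbx hby

theorem Zpart_neg_pos_and_fpRatioBound (hsym : ∀ x y, W x y = W y x) (hdiag : ∀ x, W x x = 0)
    (h01 : ∀ x y, W x y = 0 ∨ W x y = 1) (hμ : ∀ x, 0 ≤ μ x) (hp : ∀ x, 0 ≤ p x)
    (hFP : ∀ x, p x * Zpart W (Γstar W x) μ ≤ μ x) (S : Finset P) :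
    0 < Zpart W S (fun z => -p z) ∧ ∀ x ∉ S, FPRatioBound W μ p S x := by
  induction S using Finset.strongInduction with
  | H S ih =>
  have hpos : 0 < Zpart W S (fun z => -p z) := by
    rcases S.eq_empty_or_nonempty with rfl | ⟨y, hy⟩
    · rw [Zpart_empty]
      exact one_pos
    obtain ⟨S, hyS, rfl⟩ : ∃ S', y ∉ S' ∧ insert y S' = S :=
      ⟨S.erase y, notMem_erase y S, insert_erase hy⟩
    have hS := ih S (ssubset_insert hyS)
    have hSy := ih (S \ Γstar W y) (sdiff_subset.trans_ssubset (ssubset_insert hyS))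
    have h := (hS.2 y hyS).le_one_add_mul_Zpart_insert hsym hdiag h01 hμ (hp y) hyS hSy.1.le
    exact pos_of_mul_pos_right (hS.1.trans_le h) (by linarith [hμ y])
  refine ⟨hpos, fun x hx => ?_⟩
  by_cases hdisj : Disjoint S (Γstar W x)
  · exact fpRatioBound_of_disjoint (hFP x) hpos.le hdisj
  obtain ⟨y, hy, hyx⟩ := not_disjoint_iff.1 hdisj
  obtain ⟨S, hyS, rfl⟩ : ∃ S', y ∉ S' ∧ insert y S' = S :=
    ⟨S.erase y, notMem_erase y S, insert_erase hy⟩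
  have hS := (ih S (ssubset_insert hyS)).2
  have hSx := ih (S \ Γstar W x) (sdiff_subset.trans_ssubset (ssubset_insert hyS))
  exact (hS x (fun h => hx (mem_insert_of_mem h))).insert_of_mem_Γstar hsym hdiag h01 hμ (hp x)
    hyS hyx hSx.1.le (hS y hyS)

end FernandezProcacci

theorem fp_log_partition_bound {P : Type*} [Fintype P] [DecidableEq P] (W : P → P → ℕ)
    (hsym : ∀ x y, W x y = W y x) (hdiag : ∀ x, W x x = 0)
    (h01 : ∀ x y, W x y = 0 ∨ W x y = 1)
    (μ p : P → ℝ) (hμ : ∀ x, 0 ≤ μ x) (hp : ∀ x, 0 ≤ p x)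
    (hFP : ∀ x, p x * Zpart W (Γstar W x) μ ≤ μ x)
    (Λ : Finset P) :
    (∏ x ∈ Λ, (1 + μ x)⁻¹) ≤ Zpart W Λ (fun y => -p y) := by
  have invariant := Zpart_neg_pos_and_fpRatioBound hsym hdiag h01 hμ hp hFP
  induction Λ using Finset.induction_on with
  | empty => rw [prod_empty, Zpart_empty]
  | insert y Λ hy ih =>
    have hy1 : 0 < 1 + μ y := by linarith [hμ y]
    have hstep := ((invariant Λ).2 y hy).le_one_add_mul_Zpart_insert hsym hdiag h01 hμ (hp y) hy
      (invariant (Λ \ Γstar W y)).1.le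
    rw [prod_insert hy]
    calc (1 + μ y)⁻¹ * ∏ x ∈ Λ, (1 + μ x)⁻¹ ≤ (1 + μ y)⁻¹ * Zpart W Λ (fun z => -p z) :=
          mul_le_mul_of_nonneg_left ih (inv_nonneg.2 hy1.le)
      _ ≤ Zpart W (insert y Λ) (fun z => -p z) := by
          rwa [inv_mul_le_iff₀ hy1]
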